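/- arXiv:1201.2606 — 3 statements merged into one kernel-verified Lean document; each statement's English description precedes it below -/
import Mathlib

section
/- Let M be a d×d integer dilation matrix with digit set D(M) = {s_0,…,s_{m−1}}, and let c ∈ (1/2)ℤ^d. A trigonometric polynomial m_0 is symmetric with respect to c in the sense that h_n = h_{2c−n} for all n ∈ ℤ^d if and only if its polyphase components satisfy μ_{0k}(ξ) = e^{2πi(M^{−1}(2c−s_k−s_l),ξ)} μ_{0l}(−ξ) for each k, where l ∈ {0,…,m−1} is the unique index with M^{−1}(2c−s_k−s_l) ∈ ℤ^d. -/
open Complex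

/-- The trigonometric polynomial with (finitely supported) coefficients `h`. -/
noncomputable def trig {d : ℕ} (h : (Fin d → ℤ) →₀ ℂ) (ξ : Fin d → ℝ) : ℂ :=
  h.sum fun k a => a * Complex.exp (2 * (Real.pi : ℂ) * Complex.I * ∑ j, (k j : ℂ) * (ξ j : ℂ))

/-- A dilation matrix: an integer matrix all of whose (complex) eigenvalues
exceed `1` in modulus. -/
def IsDilation {d : ℕ} (M : Matrix (Fin d) (Fin d) ℤ) : Prop :=
  ∀ μ : ℂ, (Matrix.charpoly (M.map (Int.cast : ℤ → ℂ))).IsRoot μ → 1 < ‖μ‖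

/-!
Writing `n = M a + s_k`, the symmetry `h_n = h_{2c-n}` says exactly that
`h_{M a + s_k} = h_{M (p - a) + s_l}` for all `a`, whenever `M p = 2c - s_k - s_l`.
Reindexing `a ↦ p - a` turns `e^{2πi(p,ξ)} μ_{0l}(-ξ)` into `1/√m` times the trigonometric series
with coefficients `a ↦ h_{M (p - a) + s_l}`, so the theorem reduces to the uniqueness of the
coefficients of a trigonometric polynomial. That uniqueness is Dedekind's linear independence of
the distinct characters `ξ ↦ e^{2πi(p,ξ)}` of `ℝ^d`.
-/

open Function

noncomputable def charExp {d : ℕ} (p : Fin d → ℤ) : AddChar (Fin d → ℝ) ℂ where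
  toFun ξ := exp (2 * (Real.pi : ℂ) * I * ∑ j, (p j : ℂ) * (ξ j : ℂ))
  map_zero_eq_one' := by simp
  map_add_eq_mul' ξ η := by
    simp only [Pi.add_apply, ofReal_add, mul_add, Finset.sum_add_distrib, exp_add]

section charExp

variable {d : ℕ}

lemma charExp_apply (p : Fin d → ℤ) (ξ : Fin d → ℝ) :
    charExp p ξ = exp (2 * (Real.pi : ℂ) * I * ∑ j, (p j : ℂ) * (ξ j : ℂ)) := rfl

lemma charExp_ne_zero (p : Fin d → ℤ) (ξ : Fin d → ℝ) : charExp p ξ ≠ 0 :=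
  exp_ne_zero _

lemma charExp_add (p q : Fin d → ℤ) (ξ : Fin d → ℝ) :
    charExp (p + q) ξ = charExp p ξ * charExp q ξ := by
  simp only [charExp_apply, Pi.add_apply, Int.cast_add, add_mul, Finset.sum_add_distrib, mul_add,
    exp_add]

lemma charExp_single (p : Fin d → ℤ) (j : Fin d) (t : ℝ) :
    charExp p (Pi.single j t) = exp (2 * (Real.pi : ℂ) * I * (p j * t)) := by
  rw [charExp_apply, Finset.sum_eq_single j (fun i _ hij => by simp [hij]) (by simp)]
  simp

lemma charExp_injective : Injective (charExp (d := d)) := by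
  intro p q hpq
  by_contra hne
  obtain ⟨j, hj⟩ := ne_iff.mp hne
  have ha : ((p j - q j : ℤ) : ℂ) ≠ 0 := by exact_mod_cast sub_ne_zero.mpr hj
  -- at `t = 1 / (2 (p_j - q_j))` the two characters differ by the factor `e^{πi} = -1`
  have key := congrArg (· (Pi.single j (2 * (p j - q j : ℝ))⁻¹)) hpq
  simp only [charExp_single] at key
  have : exp (2 * (Real.pi : ℂ) * I * ((p j - q j : ℤ) * ((2 * (p j - q j : ℝ))⁻¹ : ℝ))) = 1 := by
    rw [Int.cast_sub, sub_mul, mul_sub, exp_sub, key, div_self (exp_ne_zero _)]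
  rw [show 2 * (Real.pi : ℂ) * I * ((p j - q j : ℤ) * ((2 * (p j - q j : ℝ))⁻¹ : ℝ))
      = Real.pi * I by push_cast at ha ⊢; field_simp, exp_pi_mul_I] at this
  norm_num at this

theorem linearIndependent_charExp :
    LinearIndependent ℂ fun p : Fin d → ℤ => ⇑(charExp p) :=
  (linearIndependent_monoidHom (Multiplicative (Fin d → ℝ)) ℂ).comp
    (fun p => (charExp p).toMonoidHom) (AddChar.toMonoidHomEquiv.injective.comp charExp_injective)

theorem trig_eq_linearCombination (h : (Fin d → ℤ) →₀ ℂ) :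
    trig h = Finsupp.linearCombination ℂ (fun p => ⇑(charExp p)) h := by
  ext ξ
  simp only [Finsupp.linearCombination_apply, Finsupp.sum, Finset.sum_apply, Pi.smul_apply,
    smul_eq_mul]
  rfl

theorem trig_injective : Injective (trig (d := d)) := by
  intro h₁ h₂ heq
  simp only [trig_eq_linearCombination] at heq
  exact linearIndependent_charExp heq

theorem trig_eq_finsum (h : (Fin d → ℤ) →₀ ℂ) (ξ : Fin d → ℝ) :
    trig h ξ = ∑ᶠ n, h n * charExp n ξ := by
  rw [finsum_eq_sum_of_support_subset _ (s := h.support) fun n hn => ?_]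
  · rfl
  · exact Finsupp.mem_support_iff.mpr (left_ne_zero_of_mul hn)

theorem trig_comapDomain (h : (Fin d → ℤ) →₀ ℂ) {f : (Fin d → ℤ) → (Fin d → ℤ)}
    (hf : Injective f) (ξ : Fin d → ℝ) :
    trig (h.comapDomain f hf.injOn) ξ = ∑ᶠ a, h (f a) * charExp a ξ := by
  simp only [trig_eq_finsum, Finsupp.comapDomain_apply]

theorem comp_eq_comp_iff_finsum_mul_charExp_eq (h : (Fin d → ℤ) →₀ ℂ)
    {f g : (Fin d → ℤ) → (Fin d → ℤ)} (hf : Injective f) (hg : Injective g) :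
    (∀ a, h (f a) = h (g a)) ↔
      ∀ ξ, ∑ᶠ a, h (f a) * charExp a ξ = ∑ᶠ a, h (g a) * charExp a ξ := by
  simp only [← trig_comapDomain h hf, ← trig_comapDomain h hg, ← funext_iff,
    trig_injective.eq_iff, Finsupp.ext_iff, Finsupp.comapDomain_apply]

theorem mul_finsum_mul_charExp_neg (g : (Fin d → ℤ) → ℂ) (p : Fin d → ℤ) (ξ : Fin d → ℝ) :
    charExp p ξ * ∑ᶠ b, g b * charExp b (-ξ) = ∑ᶠ a, g (p - a) * charExp a ξ := by
  rw [← finsum_comp_equiv (Equiv.subLeft p), mul_finsum]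
  refine finsum_congr fun a => ?_
  have hp : charExp p ξ = charExp (p - a) ξ * charExp a ξ := by rw [← charExp_add, sub_add_cancel]
  rw [Equiv.subLeft_apply, AddChar.map_neg_eq_inv, hp]
  field_simp [charExp_ne_zero]

end charExp

theorem IsDilation.det_ne_zero {d : ℕ} {M : Matrix (Fin d) (Fin d) ℤ} (hM : IsDilation M) :
    M.det ≠ 0 := by
  intro hdet
  have hunit : ¬IsUnit (M.map (Int.cast : ℤ → ℂ)) := by
    rw [Matrix.isUnit_iff_isUnit_det, ← Int.cast_det, hdet]
    simp
  have hroot := Matrix.mem_spectrum_iff_isRoot_charpoly.mp ((spectrum.zero_mem_iff ℂ).mpr hunit)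
  have := hM 0 hroot
  norm_num at this

theorem IsDilation.mulVec_injective {d : ℕ} {M : Matrix (Fin d) (Fin d) ℤ} (hM : IsDilation M) :
    Injective M.mulVec :=
  Matrix.isLeftRegular_iff_mulVec_injective.mp <|
    Matrix.isLeftRegular_iff_nonsingular.mpr (Matrix.nonsingular_iff_det_ne_zero.mpr hM.det_ne_zero)

theorem forall_eq_sub_iff_forall_polyphase {A B ι α : Type*} [AddGroup A] [AddCommGroup B]
    (φ : A →+ B) (s : ι → B) (hcover : ∀ n, ∃ k p, n = φ p + s k) (h : B → α) (c : B) :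
    (∀ n, h n = h (c - n)) ↔
      ∀ k l p, φ p = c - s k - s l → ∀ a, h (φ a + s k) = h (φ (p - a) + s l) := by
  constructor
  · intro hsymm k l p hp a
    rw [hsymm, map_sub, hp]
    congr 1
    abel
  · intro hpoly n
    obtain ⟨k, q, rfl⟩ := hcover n
    obtain ⟨l, r, hr⟩ := hcover (c - (φ q + s k))
    have hp : φ (r + q) = c - s k - s l := by
      rw [map_add, ← sub_eq_of_eq_add hr]
      abel
    rw [hpoly k l (r + q) hp q, add_sub_cancel_right, hr]

theorem stmt7_general {d : ℕ} (M : Matrix (Fin d) (Fin d) ℤ) (hM : IsDilation M)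
    (m : ℕ)
    (s : Fin m → (Fin d → ℤ))
    (hdig : ∀ n : Fin d → ℤ, ∃! k : Fin m, ∃ p : Fin d → ℤ, n = M.mulVec p + s k)
    (c2 : Fin d → ℤ)
    (h : (Fin d → ℤ) →₀ ℂ)
    (μ : Fin m → (Fin d → ℝ) → ℂ)
    (hμ : ∀ k (ξ : Fin d → ℝ), μ k ξ =
      (1 / Real.sqrt m : ℝ) * ∑ᶠ p : Fin d → ℤ,
        h (M.mulVec p + s k) *
          Complex.exp (2 * (Real.pi : ℂ) * Complex.I * ∑ j, (p j : ℂ) * (ξ j : ℂ))) :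
    (∀ n : Fin d → ℤ, h n = h (c2 - n)) ↔
    (∀ k l : Fin m, ∀ p : Fin d → ℤ, M.mulVec p = c2 - s k - s l →
      ∀ ξ : Fin d → ℝ, μ k ξ =
        Complex.exp (2 * (Real.pi : ℂ) * Complex.I * ∑ j, (p j : ℂ) * (ξ j : ℂ)) *
          μ l (-ξ)) := by
  have hinj := hM.mulVec_injective
  have hscale : ((1 / Real.sqrt m : ℝ) : ℂ) ≠ 0 := by
    have : 0 < m := (hdig 0).exists.choose.pos
    exact_mod_cast (by positivity : 1 / Real.sqrt m ≠ 0)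
  have hμ' : ∀ k ξ, μ k ξ =
      ((1 / Real.sqrt m : ℝ) : ℂ) * ∑ᶠ a, h (M.mulVec a + s k) * charExp a ξ := hμ
  refine (forall_eq_sub_iff_forall_polyphase M.mulVecLin.toAddMonoidHom s
    (fun n => (hdig n).exists) h c2).trans (forall₄_congr fun k l p _ => ?_)
  refine (comp_eq_comp_iff_finsum_mul_charExp_eq h (f := fun a => M.mulVec a + s k)
    (g := fun a => M.mulVec (p - a) + s l) (add_left_injective _ |>.comp hinj)
    (add_left_injective _ |>.comp <| hinj.comp sub_right_injective)).trans
    (forall_congr' fun ξ => ?_)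
  change _ ↔ μ k ξ = charExp p ξ * μ l (-ξ)
  rw [hμ', hμ', mul_left_comm, mul_finsum_mul_charExp_neg, mul_right_inj' hscale]

/-- Lemma 5 of the paper: `m₀` is point symmetric with respect to `c` (i.e.
`h_n = h_{2c-n}`, where `c2 = 2c ∈ ℤ^d`) iff its polyphase components satisfy
`μ_{0k}(ξ) = e^{2πi(M⁻¹(2c-sₖ-sₗ),ξ)} μ_{0l}(-ξ)` where `l` is the unique index
with `M⁻¹(2c-sₖ-sₗ) ∈ ℤ^d`. -/
theorem stmt7 {d : ℕ} (M : Matrix (Fin d) (Fin d) ℤ) (hM : IsDilation M)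
    (m : ℕ) (hm : m = M.det.natAbs)
    (s : Fin m → (Fin d → ℤ))
    (hdig : ∀ n : Fin d → ℤ, ∃! k : Fin m, ∃ p : Fin d → ℤ, n = M.mulVec p + s k)
    (c2 : Fin d → ℤ)
    (h : (Fin d → ℤ) →₀ ℂ)
    (μ : Fin m → (Fin d → ℝ) → ℂ)
    (hμ : ∀ k (ξ : Fin d → ℝ), μ k ξ =
      (1 / Real.sqrt m : ℝ) * ∑ᶠ p : Fin d → ℤ,
        h (M.mulVec p + s k) *
          Complex.exp (2 * (Real.pi : ℂ) * Complex.I * ∑ j, (p j : ℂ) * (ξ j : ℂ))) :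
    (∀ n : Fin d → ℤ, h n = h (c2 - n)) ↔
    (∀ k l : Fin m, ∀ p : Fin d → ℤ, M.mulVec p = c2 - s k - s l →
      ∀ ξ : Fin d → ℝ, μ k ξ =
        Complex.exp (2 * (Real.pi : ℂ) * Complex.I * ∑ j, (p j : ℂ) * (ξ j : ℂ)) *
          μ l (-ξ)) :=
  stmt7_general M hM m s hdig c2 h μ hμ
end

section
/- Let M be a d×d integer dilation matrix with digits chosen so that M^{−1}s_k ∈ [0,1)^d for all k, and let c ∈ (1/2)ℤ^d. Then the number of indices j ∈ {0,…,m−1} such that M^{−1}(2c−2s_j) ∈ ℤ^d is at most 2^d. -/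
/-!
With no digits there is nothing to count; otherwise `m = |det M|` makes `M` invertible.
Write `A` for `M` over `ℝ` and `v = A⁻¹(2c)`. If `M p = 2c - 2sⱼ` with `p` integral, then
`p = v - 2A⁻¹sⱼ`, and `A⁻¹sⱼ ∈ [0,1)^d` puts every coordinate of `p` in `(vᵢ - 2, vᵢ]`, which
contains only the two integers `⌊vᵢ⌋ - 1` and `⌊vᵢ⌋`. Since `p` determines `sⱼ`, and the digits
are pairwise distinct, `j` ranges over at most `2^d` values.
-/

open Matrix

theorem Matrix.injective_of_existsUnique_eq_mulVec_add {n ι : Type*} [Fintype n]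
    (M : Matrix n n ℤ) {s : ι → n → ℤ} (hs : ∀ x : n → ℤ, ∃! k, ∃ p, x = M *ᵥ p + s k) :
    Function.Injective s := by
  intro a b hab
  obtain ⟨k, -, huniq⟩ := hs (s a)
  exact (huniq a ⟨0, by simp⟩).trans (huniq b ⟨0, by simp [hab]⟩).symm

theorem Matrix.intCast_eq_inv_mulVec_sub {n : Type*} [Fintype n] [DecidableEq n]
    {M : Matrix n n ℤ} (hM : M.det ≠ 0) {p c t : n → ℤ} (h : M *ᵥ p = c - 2 • t) :
    (fun i => (p i : ℝ)) = (M.map (Int.cast : ℤ → ℝ))⁻¹ *ᵥ (fun i => (c i : ℝ)) -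
      2 • (M.map (Int.cast : ℤ → ℝ))⁻¹ *ᵥ (fun i => (t i : ℝ)) := by
  set A : Matrix n n ℝ := M.map (Int.cast : ℤ → ℝ)
  have hA : IsUnit A.det := isUnit_iff_ne_zero.2 <| by
    rw [← Int.cast_det]
    exact_mod_cast hM
  have hcast : A *ᵥ (fun i => (p i : ℝ)) = (fun i => (c i : ℝ)) - 2 • fun i => (t i : ℝ) := by
    funext i
    have hi := RingHom.map_mulVec (Int.castRingHom ℝ) M p i
    rw [h] at hi
    simpa [A, Function.comp_def] using hi.symm
  rw [← mulVec_smul, ← mulVec_sub, ← hcast, mulVec_mulVec, nonsing_inv_mul _ hA, one_mulVec]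

theorem Int.mem_pair_floor_of_eq_sub_two_mul {α : Type*} [Ring α] [LinearOrder α]
    [IsStrictOrderedRing α] [FloorRing α] {z : ℤ} {x w : α} (h : (z : α) = x - 2 * w)
    (hw : w ∈ Set.Ico 0 1) : z ∈ ({⌊x⌋ - 1, ⌊x⌋} : Finset ℤ) := by
  obtain ⟨hw₀, hw₁⟩ := hw
  have hle : z ≤ ⌊x⌋ := Int.le_floor.2 (h ▸ sub_le_self x (mul_nonneg zero_le_two hw₀))
  have hlt : ⌊x⌋ < z + 2 := Int.floor_lt.2 <| by
    push_cast
    rw [h, sub_add_comm]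
    exact lt_add_of_pos_left x (sub_pos.2 (mul_lt_of_lt_one_right two_pos hw₁))
  simp only [Finset.mem_insert, Finset.mem_singleton]
  omega

theorem Fintype.card_piFinset_pair_le {ι α : Type*} [Fintype ι] [DecidableEq ι] [DecidableEq α]
    (a b : ι → α) : (piFinset fun i => ({a i, b i} : Finset α)).card ≤ 2 ^ Fintype.card ι := by
  rw [card_piFinset]
  exact Finset.prod_le_pow_card _ _ _ fun _ _ => Finset.card_le_two

theorem stmt8_general {d : ℕ} (M : Matrix (Fin d) (Fin d) ℤ)
    (m : ℕ) (hm : m = M.det.natAbs)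
    (s : Fin m → (Fin d → ℤ))
    (hdig : ∀ n : Fin d → ℤ, ∃! k : Fin m, ∃ p : Fin d → ℤ, n = M.mulVec p + s k)
    (hcube : ∀ k : Fin m, ∀ j : Fin d,
      ((M.map (Int.cast : ℤ → ℝ))⁻¹.mulVec (fun i => (s k i : ℝ))) j ∈ Set.Ico (0 : ℝ) 1)
    (c2 : Fin d → ℤ) :
    Nat.card {j : Fin m // ∃ p : Fin d → ℤ, M.mulVec p = c2 - 2 • s j} ≤ 2 ^ d := by
  classical
  obtain rfl | hm_pos := Nat.eq_zero_or_pos m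
  · simp
  have hdet : M.det ≠ 0 := Int.natAbs_pos.mp (hm ▸ hm_pos)
  set v := (M.map (Int.cast : ℤ → ℝ))⁻¹ *ᵥ fun i => (c2 i : ℝ)
  let box := Fintype.piFinset fun i => ({⌊v i⌋ - 1, ⌊v i⌋} : Finset ℤ)
  let P : {j : Fin m // ∃ p, M *ᵥ p = c2 - 2 • s j} → box := fun j =>
    ⟨j.2.choose, Fintype.mem_piFinset.2 fun i => Int.mem_pair_floor_of_eq_sub_two_mul
      (by simpa using congrFun (intCast_eq_inv_mulVec_sub hdet j.2.choose_spec) i) (hcube j i)⟩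
  have hP : Function.Injective P := by
    intro j j' hjj'
    have hsub : c2 - 2 • s j = c2 - 2 • s j' := by
      rw [← j.2.choose_spec, ← j'.2.choose_spec]
      exact congrArg (M *ᵥ ·) (congrArg Subtype.val hjj')
    have hs : s j = s j' := smul_right_injective _ two_ne_zero (sub_right_injective hsub)
    exact Subtype.ext (injective_of_existsUnique_eq_mulVec_add M hdig hs)
  calc _ ≤ Nat.card box := Nat.card_le_card_of_injective P hP
    _ = box.card := Nat.card_eq_finsetCard _
    _ ≤ 2 ^ Fintype.card (Fin d) := Fintype.card_piFinset_pair_le _ _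
    _ = 2 ^ d := by rw [Fintype.card_fin]

/-- If the digits satisfy `M⁻¹sₖ ∈ [0,1)^d` and `2c = c2 ∈ ℤ^d`, then the number of
indices `j` with `M⁻¹(2c - 2sⱼ) ∈ ℤ^d` is at most `2^d`. -/
theorem stmt8 {d : ℕ} (M : Matrix (Fin d) (Fin d) ℤ) (hM : IsDilation M)
    (m : ℕ) (hm : m = M.det.natAbs)
    (s : Fin m → (Fin d → ℤ))
    (hdig : ∀ n : Fin d → ℤ, ∃! k : Fin m, ∃ p : Fin d → ℤ, n = M.mulVec p + s k)
    (hcube : ∀ k : Fin m, ∀ j : Fin d,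
      ((M.map (Int.cast : ℤ → ℝ))⁻¹.mulVec (fun i => (s k i : ℝ))) j ∈ Set.Ico (0 : ℝ) 1)
    (c2 : Fin d → ℤ) :
    Nat.card {j : Fin m // ∃ p : Fin d → ℤ, M.mulVec p = c2 - 2 • s j} ≤ 2 ^ d :=
  stmt8_general M m hm s hdig hcube c2
end

section
/- Let n ∈ ℕ and let T be a real-valued trigonometric polynomial on ℝ^d with D^β T(0) = 0 for all multi-indices β with [β] < n. Then there exist real-valued trigonometric polynomials Ã_α and B̃_α, for multi-indices α with [α] = n, such that T(ξ) = Σ_{[α]=n} ( Ã_α(ξ)·Re Π_α(ξ) + B̃_α(ξ)·Im Π_α(ξ) ). -/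
open Complex

/-- Partial derivative in the `j`-th coordinate. -/
noncomputable def pderiv' {d : ℕ} (j : Fin d) (f : (Fin d → ℝ) → ℂ) : (Fin d → ℝ) → ℂ :=
  fun ξ => deriv (fun s : ℝ => f (Function.update ξ j s)) (ξ j)

/-- The partial derivative `D^β` of multi-order `β`. -/
noncomputable def mderiv {d : ℕ} (β : Fin d → ℕ) (f : (Fin d → ℝ) → ℂ) : (Fin d → ℝ) → ℂ :=
  ((List.ofFn fun j : Fin d => (pderiv' j)^[β j]).foldr (· ∘ ·) id) f

/-- `[β] = ∑ⱼ βⱼ`. -/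
def degSum {d : ℕ} (β : Fin d → ℕ) : ℕ := ∑ j, β j

/-- `Π_α(ξ) = ∏ⱼ (1 - e^{2πiξⱼ})^{αⱼ}`. -/
noncomputable def PiPoly {d : ℕ} (α : Fin d → ℕ) (ξ : Fin d → ℝ) : ℂ :=
  ∏ j, (1 - Complex.exp (2 * (Real.pi : ℂ) * Complex.I * (ξ j : ℂ))) ^ (α j)

/-- The (finite) set of all multi-indices `α` with `[α] = n`. -/
def msupp (d n : ℕ) : Finset (Fin d → ℕ) :=
  (Finset.Iic (fun _ : Fin d => n)).filter (fun α => degSum α = n)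

/-
Write `T = Σ_k h_k e^{2πi(k,ξ)}` and view `h` as an element of the Laurent polynomial
ring `ℂ[X_1^{±1}, …, X_d^{±1}]`, which maps onto trigonometric polynomials by `X_j ↦ e^{2πiξ_j}`.
The vanishing of `D^β T(0)` for `[β] < n` says that the moments `Σ_k h_k k^β`, and hence the
binomial moments `Σ_k h_k ∏_j C(k_j, β_j)` (as `C(k_j, β_j)` is a polynomial of degree `β_j` in
`k_j`), vanish for `[β] < n`. Modulo the ideal `J` generated
by the products `∏_j (X_j - 1)^{α_j}` with `[α] = n`, each `X_j - 1` is nilpotent, so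
`X^k = ∏_j (1 + (X_j - 1))^{k_j}` is a truncated binomial series even for negative `k_j`, and `h`
reduces to `Σ_{[β] < n}` (binomial moment) `· ∏_j (X_j - 1)^{β_j} = 0`. Thus `h ∈ J`, i.e.
`T = Σ_{[α]=n} G_α Π_α` with trigonometric polynomials `G_α`; since `T` is real, taking real parts
gives the decomposition with `Ã_α = Re G_α` and `B̃_α = -Im G_α`, which are again trigonometric
polynomials because these are closed under conjugation.
-/

open Finset Polynomial AddMonoidAlgebra

namespace TrigPolynomial

variable {d : ℕ}

noncomputable def expChar (k : Fin d → ℤ) (ξ : Fin d → ℝ) : ℂ :=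
  exp (2 * (Real.pi : ℂ) * I * ∑ j, (k j : ℂ) * (ξ j : ℂ))

noncomputable def trigSum (s : Finset (Fin d → ℤ)) (a : (Fin d → ℤ) → ℂ) (ξ : Fin d → ℝ) :
    ℂ :=
  ∑ k ∈ s, a k * expChar k ξ

lemma trig_eq_trigSum (h : (Fin d → ℤ) →₀ ℂ) : trig h = trigSum h.support h := rfl

lemma expChar_apply_zero (k : Fin d → ℤ) : expChar k 0 = 1 := by
  simp [expChar]

lemma hasDerivAt_expChar_update (k : Fin d → ℤ) (ξ : Fin d → ℝ) (j : Fin d) (t : ℝ) :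
    HasDerivAt (fun s : ℝ => expChar k (Function.update ξ j s))
      (2 * (Real.pi : ℂ) * I * k j * expChar k (Function.update ξ j t)) t := by
  have hsum := HasDerivAt.fun_sum (u := univ) fun i _ =>
    (hasDerivAt_pi.mp (hasDerivAt_update ξ j t) i).ofReal_comp.const_mul (k i : ℂ)
  have hcoeff : ∑ i, (k i : ℂ) * (((Pi.single j (1 : ℝ) : Fin d → ℝ) i : ℝ) : ℂ) = k j := by
    simp [Pi.single_apply, apply_ite]
  rw [hcoeff] at hsum
  unfold expChar
  convert (hsum.const_mul (2 * (Real.pi : ℂ) * I)).cexp using 1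
  ring

lemma pderiv'_trigSum (s : Finset (Fin d → ℤ)) (a : (Fin d → ℤ) → ℂ) (j : Fin d) :
    pderiv' j (trigSum s a) = trigSum s (fun k => 2 * (Real.pi : ℂ) * I * k j * a k) := by
  funext ξ
  have hderiv := HasDerivAt.fun_sum (u := s) fun k _ =>
    (hasDerivAt_expChar_update k ξ j (ξ j)).const_mul (a k)
  rw [Function.update_eq_self] at hderiv
  change deriv (fun t => ∑ k ∈ s, a k * expChar k (Function.update ξ j t)) (ξ j) = _
  rw [hderiv.deriv]
  exact sum_congr rfl fun k _ => by ring

lemma iterate_pderiv'_trigSum (s : Finset (Fin d → ℤ)) (a : (Fin d → ℤ) → ℂ) (j : Fin d)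
    (m : ℕ) :
    (pderiv' j)^[m] (trigSum s a) =
      trigSum s (fun k => (2 * (Real.pi : ℂ) * I * k j) ^ m * a k) := by
  induction m with
  | zero => simp
  | succ m ih =>
    rw [Function.iterate_succ_apply', ih, pderiv'_trigSum]
    congr 1
    funext k
    ring

lemma foldr_iterate_pderiv'_trigSum (β : Fin d → ℕ) (L : List (Fin d))
    (s : Finset (Fin d → ℤ)) (a : (Fin d → ℤ) → ℂ) :
    (L.map fun j => (pderiv' j)^[β j]).foldr (· ∘ ·) id (trigSum s a) =
      trigSum s (fun k => (L.map fun j => (2 * (Real.pi : ℂ) * I * k j) ^ β j).prod * a k) := by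
  induction L with
  | nil => simp
  | cons j L ih =>
    simp only [List.map_cons, List.foldr_cons, Function.comp_apply, ih, iterate_pderiv'_trigSum,
      List.prod_cons, mul_assoc]

lemma mderiv_trigSum (β : Fin d → ℕ) (s : Finset (Fin d → ℤ)) (a : (Fin d → ℤ) → ℂ) :
    mderiv β (trigSum s a) =
      trigSum s (fun k => (∏ j, (2 * (Real.pi : ℂ) * I * k j) ^ β j) * a k) := by
  rw [mderiv, List.ofFn_eq_map, foldr_iterate_pderiv'_trigSum]
  simp only [Fin.prod_univ_def]

section Moments

variable {R : Type*} [CommRing R]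

def moment (h : (Fin d → ℤ) →₀ R) (β : Fin d → ℕ) : R :=
  h.sum fun k a => a * ∏ j, (k j : R) ^ β j

def binomialMoment (h : (Fin d → ℤ) →₀ R) (β : Fin d → ℕ) : R :=
  h.sum fun k a => a * ∏ j, ((Ring.choose (k j) (β j) : ℤ) : R)

lemma degSum_lt_of_mem_piFinset {n : ℕ} {β γ : Fin d → ℕ} (hβ : degSum β < n)
    (hγ : γ ∈ Fintype.piFinset fun j => range (β j + 1)) : degSum γ < n := by
  refine lt_of_le_of_lt (sum_le_sum fun j _ => ?_) hβ
  exact Nat.lt_succ_iff.mp (mem_range.mp (Fintype.mem_piFinset.mp hγ j))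

lemma sum_mul_prod_eval_eq_zero {n : ℕ} {h : (Fin d → ℤ) →₀ R}
    (hmom : ∀ γ, degSum γ < n → moment h γ = 0) {β : Fin d → ℕ} (hβ : degSum β < n)
    (p : Fin d → R[X]) (hp : ∀ j, (p j).natDegree ≤ β j) :
    (h.sum fun k a => a * ∏ j, (p j).eval (k j : R)) = 0 := by
  classical
  have hexpand (k : Fin d → ℤ) : ∏ j, (p j).eval (k j : R) =
      ∑ γ ∈ Fintype.piFinset fun j => range (β j + 1),
        (∏ j, (p j).coeff (γ j)) * ∏ j, (k j : R) ^ γ j := by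
    simp_rw [fun j => eval_eq_sum_range' (Nat.lt_succ_of_le (hp j)) (k j : R), prod_univ_sum,
      prod_mul_distrib]
  calc (h.sum fun k a => a * ∏ j, (p j).eval (k j : R))
      = ∑ γ ∈ Fintype.piFinset fun j => range (β j + 1),
          (∏ j, (p j).coeff (γ j)) * moment h γ := by
        simp only [hexpand, moment, Finsupp.sum, mul_sum]
        rw [sum_comm]
        exact sum_congr rfl fun γ _ => sum_congr rfl fun k _ => by ring
    _ = 0 := sum_eq_zero fun γ hγ => by
        rw [hmom γ (degSum_lt_of_mem_piFinset hβ hγ), mul_zero]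

end Moments

lemma intCast_choose_eq_eval {K : Type*} [Field K] [CharZero K] (m : ℤ) (t : ℕ) :
    ((Ring.choose m t : ℤ) : K) = (C (t.factorial : K)⁻¹ * descPochhammer K t).eval (m : K) := by
  rw [eval_mul, eval_C, ← descPochhammer_eval_cast, eval_eq_smeval,
    Ring.descPochhammer_eq_factorial_smul_choose, nsmul_eq_mul]
  push_cast
  rw [inv_mul_cancel_left₀ (Nat.cast_ne_zero.mpr t.factorial_ne_zero)]

lemma binomialMoment_eq_zero {K : Type*} [Field K] [CharZero K] {n : ℕ}
    {h : (Fin d → ℤ) →₀ K} (hmom : ∀ γ, degSum γ < n → moment h γ = 0) {β : Fin d → ℕ}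
    (hβ : degSum β < n) : binomialMoment h β = 0 := by
  simp only [binomialMoment, intCast_choose_eq_eval]
  exact sum_mul_prod_eval_eq_zero hmom hβ _ fun j =>
    (natDegree_C_mul_le _ _).trans (descPochhammer_natDegree K (β j)).le

lemma mderiv_trig_apply_zero (h : (Fin d → ℤ) →₀ ℂ) (β : Fin d → ℕ) :
    mderiv β (trig h) 0 = (2 * (Real.pi : ℂ) * I) ^ degSum β * moment h β := by
  rw [trig_eq_trigSum, mderiv_trigSum]
  simp only [trigSum, expChar_apply_zero, mul_one, moment, Finsupp.sum, mul_sum]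
  refine sum_congr rfl fun k _ => ?_
  rw [degSum, ← prod_pow_eq_pow_sum, mul_left_comm, ← prod_mul_distrib, mul_comm]
  simp only [mul_pow]

lemma moment_eq_zero_of_mderiv_eq_zero {h : (Fin d → ℤ) →₀ ℂ} {β : Fin d → ℕ}
    (hβ : mderiv β (trig h) 0 = 0) : moment h β = 0 := by
  rw [mderiv_trig_apply_zero] at hβ
  refine (mul_eq_zero.mp hβ).resolve_left (pow_ne_zero _ ?_)
  simp [Real.pi_ne_zero, I_ne_zero]

theorem coe_zpow_eq_sum_range_choose {A : Type*} [CommRing A] {z : A} {n : ℕ}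
    (hz : z ^ n = 0) (u : Aˣ) (hu : (u : A) = 1 + z) (m : ℤ) :
    ((u ^ m : Aˣ) : A) = ∑ t ∈ range n, ((Ring.choose m t : ℤ) : A) * z ^ t := by
  cases n with
  | zero =>
    have : Subsingleton A := subsingleton_of_zero_eq_one (by simpa using hz.symm)
    exact Subsingleton.elim _ _
  | succ n =>
  set P : ℤ → A := fun m => ∑ t ∈ range (n + 1), ((Ring.choose m t : ℤ) : A) * z ^ t
  have hP0 : P 0 = 1 := by
    simp [P, sum_range_succ']
  -- Pascal's rule, the top term of `P m * z` being killed by `z ^ (n + 1) = 0`.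
  have hstep (m : ℤ) : P m * u = P (m + 1) := by
    have htop : ((Ring.choose m n : ℤ) : A) * z ^ n * z = 0 := by
      rw [mul_assoc, ← pow_succ, hz, mul_zero]
    simp only [P, hu, mul_add, mul_one, sum_mul]
    rw [sum_range_succ (fun t => ((Ring.choose m t : ℤ) : A) * z ^ t * z), htop, add_zero,
      sum_range_succ' _ n, sum_range_succ' (fun t => ((Ring.choose (m + 1) t : ℤ) : A) * z ^ t)]
    simp only [Ring.choose_succ_succ, Ring.choose_zero_right, Int.cast_add, add_mul,
      sum_add_distrib, pow_succ, mul_assoc]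
    abel
  induction m using Int.induction_on with
  | zero => simpa using hP0.symm
  | succ m ih => rw [zpow_add_one, Units.val_mul, ih, hstep]
  | pred m ih =>
    rw [← u.mul_left_inj, ← Units.val_mul, ← zpow_add_one, sub_add_cancel, ih, hstep,
      sub_add_cancel]

lemma mem_msupp {n : ℕ} {α : Fin d → ℕ} : α ∈ msupp d n ↔ degSum α = n := by
  refine ⟨fun hα => (mem_filter.mp hα).2,
    fun hα => mem_filter.mpr ⟨mem_Iic.mpr fun j => ?_, hα⟩⟩
  exact hα ▸ single_le_sum (fun i _ => Nat.zero_le (α i)) (mem_univ j)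

lemma exists_le_degSum_eq {n : ℕ} {β : Fin d → ℕ} (hn : n ≤ degSum β) :
    ∃ α ≤ β, degSum α = n := by
  obtain ⟨g, hg, hdeg⟩ := Finsupp.exists_le_degree_eq (Finsupp.equivFunOnFinite.symm β) n
    (by simpa [Finsupp.degree_eq_sum, degSum] using hn)
  exact ⟨g, fun j => Finsupp.le_def.mp hg j,
    by simpa [Finsupp.degree_eq_sum, degSum] using hdeg⟩

section AugmentationIdeal

variable {R : Type*} [CommRing R]

noncomputable def xSubOne (j : Fin d) : AddMonoidAlgebra R (Fin d → ℤ) :=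
  single (Pi.single j 1) 1 - 1

noncomputable def xSubOnePow (α : Fin d → ℕ) : AddMonoidAlgebra R (Fin d → ℤ) :=
  ∏ j, xSubOne j ^ α j

/-- The `n`-th power of the augmentation ideal `(X_1 - 1, …, X_d - 1)`. -/
noncomputable def augPowIdeal (R : Type*) [CommRing R] (d n : ℕ) :
    Ideal (AddMonoidAlgebra R (Fin d → ℤ)) :=
  Ideal.span (xSubOnePow '' msupp d n)

lemma xSubOnePow_mem_augPowIdeal {n : ℕ} {β : Fin d → ℕ} (hβ : n ≤ degSum β) :
    xSubOnePow β ∈ augPowIdeal R d n := by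
  obtain ⟨α, hαβ, hα⟩ := exists_le_degSum_eq hβ
  have hsplit : xSubOnePow β = xSubOnePow α * xSubOnePow (β - α) (R := R) := by
    simp only [xSubOnePow, ← prod_mul_distrib, ← pow_add, Pi.sub_apply]
    exact prod_congr rfl fun j _ => by rw [Nat.add_sub_cancel' (hαβ j)]
  rw [hsplit]
  exact Ideal.mul_mem_right _ _ (Ideal.subset_span ⟨α, mem_msupp.mpr hα, rfl⟩)

lemma xSubOne_pow_mem_augPowIdeal (n : ℕ) (j : Fin d) :
    xSubOne j ^ n ∈ augPowIdeal R d n := by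
  have hpow : xSubOne j ^ n = xSubOnePow (Pi.single j n) (R := R) := by
    rw [xSubOnePow, Fintype.prod_eq_single j fun i hij => by
      rw [Pi.single_eq_of_ne hij, pow_zero], Pi.single_eq_same]
  exact hpow ▸ xSubOnePow_mem_augPowIdeal (by simp [degSum])

lemma mk_single_one_eq_sum (n : ℕ) (k : Fin d → ℤ) :
    Ideal.Quotient.mk (augPowIdeal R d n) (single k 1) =
      ∑ β ∈ Fintype.piFinset fun _ => range n, ((∏ j, Ring.choose (k j) (β j) : ℤ) : _) *
        Ideal.Quotient.mk (augPowIdeal R d n) (xSubOnePow β) := by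
  set J := augPowIdeal R d n
  let ψ : Multiplicative (Fin d → ℤ) →* (AddMonoidAlgebra R (Fin d → ℤ) ⧸ J)ˣ :=
    (Units.map (Ideal.Quotient.mk J : _ →* _)).comp (AddMonoidAlgebra.of R _).toHomUnits
  have hψ (k : Fin d → ℤ) : (ψ (.ofAdd k) : _) = Ideal.Quotient.mk J (single k 1) := rfl
  have hk : Multiplicative.ofAdd k = ∏ j, Multiplicative.ofAdd (Pi.single j (1 : ℤ)) ^ k j := by
    simp_rw [← ofAdd_zsmul, ← ofAdd_sum, ← Pi.single_smul', smul_eq_mul, mul_one,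
      univ_sum_single]
  have hz (j : Fin d) : Ideal.Quotient.mk J (xSubOne j) ^ n = 0 := by
    rw [← map_pow, Ideal.Quotient.eq_zero_iff_mem]
    exact xSubOne_pow_mem_augPowIdeal n j
  have hu (j : Fin d) :
      (ψ (.ofAdd (Pi.single j 1)) : _) = 1 + Ideal.Quotient.mk J (xSubOne j) := by
    rw [hψ, xSubOne, map_sub, map_one, add_sub_cancel]
  rw [← hψ, hk, map_prod, Units.coe_prod]
  simp_rw [map_zpow, fun j => coe_zpow_eq_sum_range_choose (hz j) _ (hu j) (k j),
    prod_univ_sum, prod_mul_distrib, Int.cast_prod, xSubOnePow, map_prod, map_pow]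

lemma ofCoeff_eq_sum_algebraMap_mul (h : (Fin d → ℤ) →₀ R) :
    ofCoeff h =
      ∑ k ∈ h.support, algebraMap R (AddMonoidAlgebra R (Fin d → ℤ)) (h k) * single k 1 := by
  conv_lhs => rw [← sum_coeff_single (ofCoeff h)]
  simp [Finsupp.sum]

theorem ofCoeff_mem_augPowIdeal {n : ℕ} {h : (Fin d → ℤ) →₀ R}
    (hh : ∀ β, degSum β < n → binomialMoment h β = 0) :
    ofCoeff h ∈ augPowIdeal R d n := by
  rw [← Ideal.Quotient.eq_zero_iff_mem]
  calc Ideal.Quotient.mk _ (ofCoeff h)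
      = ∑ β ∈ Fintype.piFinset fun _ => range n,
          Ideal.Quotient.mk (augPowIdeal R d n) (algebraMap R _ (binomialMoment h β)) *
            Ideal.Quotient.mk _ (xSubOnePow β) := by
        simp only [ofCoeff_eq_sum_algebraMap_mul, map_sum, map_mul, mk_single_one_eq_sum,
          mul_sum]
        rw [sum_comm]
        refine sum_congr rfl fun β _ => ?_
        simp only [binomialMoment, Finsupp.sum, map_sum, sum_mul, map_mul, map_prod, map_intCast]
        exact sum_congr rfl fun k _ => by rw [Int.cast_prod]; ring
    _ = 0 := sum_eq_zero fun β _ => by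
        rcases lt_or_ge (degSum β) n with hlt | hge
        · rw [hh β hlt, map_zero, map_zero, zero_mul]
        · rw [Ideal.Quotient.eq_zero_iff_mem.mpr (xSubOnePow_mem_augPowIdeal hge), mul_zero]

end AugmentationIdeal

noncomputable def expCharHom : Multiplicative (Fin d → ℤ) →* ((Fin d → ℝ) → ℂ) where
  toFun k := expChar k.toAdd
  map_one' := funext fun ξ => by simp [expChar]
  map_mul' a b := funext fun ξ => by
    simp only [expChar, toAdd_mul, Pi.add_apply, Int.cast_add, add_mul, sum_add_distrib,
      mul_add, exp_add, Pi.mul_apply]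

noncomputable def evalTrig : AddMonoidAlgebra ℂ (Fin d → ℤ) →ₐ[ℂ] ((Fin d → ℝ) → ℂ) :=
  lift ℂ _ _ expCharHom

lemma evalTrig_single (k : Fin d → ℤ) (c : ℂ) : evalTrig (single k c) = c • expChar k :=
  lift_single _ _ _

lemma evalTrig_ofCoeff (h : (Fin d → ℤ) →₀ ℂ) : evalTrig (ofCoeff h) = trig h := by
  funext ξ
  rw [evalTrig, AddMonoidAlgebra.lift_apply, Finsupp.sum, Finset.sum_apply]
  rfl

lemma exists_eq_trig_of_mem_range {f : (Fin d → ℝ) → ℂ}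
    (hf : f ∈ (evalTrig (d := d)).range) : ∃ h, f = trig h := by
  obtain ⟨g, rfl⟩ := (AlgHom.mem_range _).mp hf
  exact ⟨g.coeff, by rw [← evalTrig_ofCoeff, ofCoeff_coeff]⟩

lemma evalTrig_xSubOne (j : Fin d) (ξ : Fin d → ℝ) :
    evalTrig (xSubOne j) ξ = exp (2 * (Real.pi : ℂ) * I * (ξ j : ℂ)) - 1 := by
  simp [xSubOne, evalTrig_single, expChar, Pi.single_apply]

lemma evalTrig_xSubOnePow (α : Fin d → ℕ) (ξ : Fin d → ℝ) :
    evalTrig (xSubOnePow α) ξ = (-1) ^ degSum α * PiPoly α ξ := by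
  simp only [xSubOnePow, map_prod, map_pow, Finset.prod_apply, Pi.pow_apply, evalTrig_xSubOne,
    PiPoly, degSum, ← prod_pow_eq_pow_sum, ← prod_mul_distrib, ← mul_pow, neg_one_mul, neg_sub]

lemma star_mem_range_evalTrig (g : AddMonoidAlgebra ℂ (Fin d → ℤ)) :
    star (evalTrig g) ∈ (evalTrig (d := d)).range := by
  induction g using AddMonoidAlgebra.induction_linear with
  | zero => simp
  | add x y hx hy => rw [map_add, star_add]; exact add_mem hx hy
  | single k c =>
    refine (AlgHom.mem_range _).mpr ⟨single (-k) (starRingEnd ℂ c), funext fun ξ => ?_⟩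
    simp only [evalTrig_single, Pi.star_apply, Pi.smul_apply, smul_eq_mul, star_mul', expChar,
      star_def, ← exp_conj, map_mul, map_sum, map_ofNat, conj_ofReal, conj_I, map_intCast,
      Pi.neg_apply, Int.cast_neg]
    congr 2
    simp only [neg_mul, sum_neg_distrib]
    ring

lemma ofReal_re_mem_range_evalTrig {f : (Fin d → ℝ) → ℂ}
    (hf : f ∈ (evalTrig (d := d)).range) :
    (fun ξ => ((f ξ).re : ℂ)) ∈ (evalTrig (d := d)).range := by
  obtain ⟨g, rfl⟩ := (AlgHom.mem_range _).mp hf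
  have hre : (fun ξ => ((evalTrig g ξ).re : ℂ)) =
      (2 : ℂ)⁻¹ • (evalTrig g + star (evalTrig g)) := by
    funext ξ
    simp [re_eq_add_conj, div_eq_inv_mul]
  rw [hre]
  exact Subalgebra.smul_mem _ (add_mem (AlgHom.mem_range_self _ g) (star_mem_range_evalTrig g)) _

lemma ofReal_im_mem_range_evalTrig {f : (Fin d → ℝ) → ℂ}
    (hf : f ∈ (evalTrig (d := d)).range) :
    (fun ξ => ((f ξ).im : ℂ)) ∈ (evalTrig (d := d)).range := by
  obtain ⟨g, rfl⟩ := (AlgHom.mem_range _).mp hf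
  have him : (fun ξ => ((evalTrig g ξ).im : ℂ)) =
      (2 * I)⁻¹ • (evalTrig g - star (evalTrig g)) := by
    funext ξ
    simp [im_eq_sub_conj, div_eq_inv_mul]
  rw [him]
  exact Subalgebra.smul_mem _ (sub_mem (AlgHom.mem_range_self _ g) (star_mem_range_evalTrig g)) _

lemma eq_sum_re_mul_re_sub_im_mul_im {ι : Type*} (s : Finset ι) {z : ℂ} (hz : z.im = 0)
    (g p : ι → ℂ) (hsum : z = ∑ i ∈ s, g i * p i) :
    z = ∑ i ∈ s, (((g i).re : ℂ) * ((p i).re : ℂ) + (-((g i).im : ℂ)) * ((p i).im : ℂ)) := by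
  conv_lhs => rw [← re_add_im z, hz, ofReal_zero, zero_mul, add_zero, hsum, re_sum]
  push_cast [mul_re]
  exact sum_congr rfl fun i _ => by ring

end TrigPolynomial

open TrigPolynomial in
theorem stmt12_general {d : ℕ} (n : ℕ)
    (T : (Fin d → ℝ) → ℂ)
    (hTtrig : ∃ hc : (Fin d → ℤ) →₀ ℂ, T = trig hc)
    (hTreal : ∀ ξ, (T ξ).im = 0)
    (hTder : ∀ β : Fin d → ℕ, degSum β < n → mderiv β T 0 = 0) :
    ∃ A B : (Fin d → ℕ) → (Fin d → ℝ) → ℂ,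
      (∀ α : Fin d → ℕ, degSum α = n →
        (∃ hc : (Fin d → ℤ) →₀ ℂ, A α = trig hc) ∧ ∀ ξ, (A α ξ).im = 0) ∧
      (∀ α : Fin d → ℕ, degSum α = n →
        (∃ hc : (Fin d → ℤ) →₀ ℂ, B α = trig hc) ∧ ∀ ξ, (B α ξ).im = 0) ∧
      (∀ ξ, T ξ = ∑ α ∈ msupp d n,
        (A α ξ * ((PiPoly α ξ).re : ℂ) + B α ξ * ((PiPoly α ξ).im : ℂ))) := by
  obtain ⟨h, rfl⟩ := hTtrig
  have hmem : ofCoeff h ∈ augPowIdeal ℂ d n :=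
    ofCoeff_mem_augPowIdeal fun β hβ => binomialMoment_eq_zero
      (fun γ hγ => moment_eq_zero_of_mderiv_eq_zero (hTder γ hγ)) hβ
  obtain ⟨c, hc⟩ := (Submodule.mem_span_image_finset_iff_exists_fun' _).mp hmem
  set G : (Fin d → ℕ) → (Fin d → ℝ) → ℂ := fun α => (-1 : ℂ) ^ n • evalTrig (c α)
  have hG (α : Fin d → ℕ) : G α ∈ (evalTrig (d := d)).range :=
    Subalgebra.smul_mem _ (AlgHom.mem_range_self _ _) _
  have hT (ξ : Fin d → ℝ) : trig h ξ = ∑ α ∈ msupp d n, G α ξ * PiPoly α ξ := by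
    rw [← evalTrig_ofCoeff, ← hc, map_sum, Finset.sum_apply]
    refine sum_congr rfl fun α hα => ?_
    simp only [G, smul_eq_mul, map_mul, Pi.mul_apply, Pi.smul_apply, evalTrig_xSubOnePow,
      mem_msupp.mp hα]
    ring
  refine ⟨fun α ξ => ((G α ξ).re : ℂ), fun α ξ => -((G α ξ).im : ℂ),
    fun α _ => ⟨exists_eq_trig_of_mem_range (ofReal_re_mem_range_evalTrig (hG α)),
      fun ξ => ofReal_im _⟩,
    fun α _ => ⟨exists_eq_trig_of_mem_range (neg_mem (ofReal_im_mem_range_evalTrig (hG α))),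
      fun ξ => by simp⟩,
    fun ξ => eq_sum_re_mul_re_sub_im_mul_im _ (hTreal ξ) _ _ (hT ξ)⟩

/-- Lemma 10 of the paper (one direction): every real-valued trigonometric polynomial
`T` with `D^β T(0) = 0` for all `[β] < n` can be written as
`T(ξ) = Σ_{[α]=n} (Ã_α(ξ)·Re Π_α(ξ) + B̃_α(ξ)·Im Π_α(ξ))` with `Ã_α`, `B̃_α`
real-valued trigonometric polynomials. -/
theorem stmt12 {d : ℕ} (n : ℕ) (hn : 0 < n)
    (T : (Fin d → ℝ) → ℂ)
    (hTtrig : ∃ hc : (Fin d → ℤ) →₀ ℂ, T = trig hc)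
    (hTreal : ∀ ξ, (T ξ).im = 0)
    (hTder : ∀ β : Fin d → ℕ, degSum β < n → mderiv β T 0 = 0) :
    ∃ A B : (Fin d → ℕ) → (Fin d → ℝ) → ℂ,
      (∀ α : Fin d → ℕ, degSum α = n →
        (∃ hc : (Fin d → ℤ) →₀ ℂ, A α = trig hc) ∧ ∀ ξ, (A α ξ).im = 0) ∧
      (∀ α : Fin d → ℕ, degSum α = n →
        (∃ hc : (Fin d → ℤ) →₀ ℂ, B α = trig hc) ∧ ∀ ξ, (B α ξ).im = 0) ∧
      (∀ ξ, T ξ = ∑ α ∈ msupp d n,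
        (A α ξ * ((PiPoly α ξ).re : ℂ) + B α ξ * ((PiPoly α ξ).im : ℂ))) :=
  stmt12_general n T hTtrig hTreal hTder
end
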